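/- arXiv:0804.2791 — 3 statements merged into one kernel-verified Lean document; each statement's English description precedes it below -/
import Mathlib

section
/- Let C and D be model categories and let F ⊣ U be an adjunction with U : C → D the right adjoint. If U preserves trivial fibrations and preserves fibrations between fibrant objects, then (F, U) is a Quillen adjunction. -/
open CategoryTheory CategoryTheory.Limits

universe v u

/-- `f` is a retract of `f'` in the arrow category. -/
def IsRetractOfMap {C : Type u} [Category.{v} C] {X Y X' Y' : C}
    (f : X ⟶ Y) (f' : X' ⟶ Y') : Prop :=
  ∃ (iX : X ⟶ X') (rX : X' ⟶ X) (iY : Y ⟶ Y') (rY : Y' ⟶ Y),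
    iX ≫ rX = 𝟙 X ∧ iY ≫ rY = 𝟙 Y ∧ iX ≫ f' = f ≫ iY ∧ f' ≫ rY = rX ≫ f

/-- A (Quillen) model structure on a category `C`: three classes of morphisms
(weak equivalences, fibrations, cofibrations) satisfying the usual axioms
(two-out-of-three, retract stability, lifting, factorization). -/
structure ModelStructure (C : Type u) [Category.{v} C] where
  W : MorphismProperty C
  Fib : MorphismProperty C
  Cof : MorphismProperty C
  w_id : ∀ X : C, W (𝟙 X)
  fib_id : ∀ X : C, Fib (𝟙 X)
  cof_id : ∀ X : C, Cof (𝟙 X)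
  w_comp : ∀ {X Y Z : C} (f : X ⟶ Y) (g : Y ⟶ Z), W f → W g → W (f ≫ g)
  fib_comp : ∀ {X Y Z : C} (f : X ⟶ Y) (g : Y ⟶ Z), Fib f → Fib g → Fib (f ≫ g)
  cof_comp : ∀ {X Y Z : C} (f : X ⟶ Y) (g : Y ⟶ Z), Cof f → Cof g → Cof (f ≫ g)
  w_of_postcomp : ∀ {X Y Z : C} (f : X ⟶ Y) (g : Y ⟶ Z), W g → W (f ≫ g) → W f
  w_of_precomp : ∀ {X Y Z : C} (f : X ⟶ Y) (g : Y ⟶ Z), W f → W (f ≫ g) → W g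
  w_retract : ∀ {X Y X' Y' : C} (f : X ⟶ Y) (f' : X' ⟶ Y'),
    IsRetractOfMap f f' → W f' → W f
  fib_retract : ∀ {X Y X' Y' : C} (f : X ⟶ Y) (f' : X' ⟶ Y'),
    IsRetractOfMap f f' → Fib f' → Fib f
  cof_retract : ∀ {X Y X' Y' : C} (f : X ⟶ Y) (f' : X' ⟶ Y'),
    IsRetractOfMap f f' → Cof f' → Cof f
  lift : ∀ {A B X Y : C} {i : A ⟶ B} {p : X ⟶ Y}, Cof i → Fib p → (W i ∨ W p) →
    ∀ {f : A ⟶ X} {g : B ⟶ Y}, f ≫ p = i ≫ g →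
      ∃ h : B ⟶ X, i ≫ h = f ∧ h ≫ p = g
  factor_cof_trivFib : ∀ {X Y : C} (f : X ⟶ Y),
    ∃ (Z : C) (i : X ⟶ Z) (p : Z ⟶ Y), Cof i ∧ Fib p ∧ W p ∧ i ≫ p = f
  factor_trivCof_fib : ∀ {X Y : C} (f : X ⟶ Y),
    ∃ (Z : C) (i : X ⟶ Z) (p : Z ⟶ Y), Cof i ∧ W i ∧ Fib p ∧ i ≫ p = f

variable {C : Type u} [Category.{v} C]

/-- An object is fibrant if the map to the terminal object is a fibration. -/
def ModelStructure.Fibrant [HasTerminal C] (M : ModelStructure C) (X : C) : Prop :=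
  M.Fib (terminal.from X)

/-- An object is cofibrant if the map from the initial object is a cofibration. -/
def ModelStructure.Cofibrant [HasInitial C] (M : ModelStructure C) (X : C) : Prop :=
  M.Cof (initial.to X)

/-- A Quillen adjunction: the left adjoint preserves cofibrations and trivial
cofibrations. -/
def IsQuillenAdjunction {D : Type u} [Category.{v} D]
    (MC : ModelStructure C) (MD : ModelStructure D)
    (F : D ⥤ C) (U : C ⥤ D) (_adj : F ⊣ U) : Prop :=
  (∀ {X Y : D} (f : X ⟶ Y), MD.Cof f → MC.Cof (F.map f)) ∧
  (∀ {X Y : D} (f : X ⟶ Y), MD.Cof f → MD.W f → MC.Cof (F.map f) ∧ MC.W (F.map f))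

/-!
STATEMENT 4: If the right adjoint `U` of an adjunction `F ⊣ U` between model categories
preserves trivial fibrations and preserves fibrations between fibrant objects, then
`(F, U)` is a Quillen adjunction.
-/

theorem quillen_adjunction_of_preserves_trivFib_and_fib_between_fibrant
    {D : Type u} [Category.{v} D] [HasTerminal C]
    (MC : ModelStructure C) (MD : ModelStructure D)
    (F : D ⥤ C) (U : C ⥤ D) (adj : F ⊣ U)
    (hTrivFib : ∀ {X Y : C} (p : X ⟶ Y), MC.Fib p → MC.W p →
      MD.Fib (U.map p) ∧ MD.W (U.map p))
    (hFib : ∀ {X Y : C} (p : X ⟶ Y), MC.Fibrant X → MC.Fibrant Y → MC.Fib p →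
      MD.Fib (U.map p)) :
    IsQuillenAdjunction MC MD F U adj := by
  have hCof : ∀ {A B : D} (i : A ⟶ B), MD.Cof i → MC.Cof (F.map i) := by
    intro A B i hi
    obtain ⟨E, c, p, hc, hp, hpw, hcp⟩ := MC.factor_cof_trivFib (F.map i)
    obtain ⟨hUp, hUpw⟩ := hTrivFib p hp hpw
    have hsq : (adj.homEquiv A E) c ≫ U.map p
        = i ≫ (adj.homEquiv B (F.obj B)) (𝟙 (F.obj B)) := by
      rw [← Adjunction.homEquiv_naturality_right, hcp,
        ← Adjunction.homEquiv_naturality_left, Category.comp_id]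
    obtain ⟨l, hl1, hl2⟩ := MD.lift hi hUp (Or.inr hUpw) hsq
    set h : F.obj B ⟶ E := (adj.homEquiv B E).symm l with hh
    have hFh : F.map i ≫ h = c := by
      rw [hh, ← Adjunction.homEquiv_naturality_left_symm, hl1, Equiv.symm_apply_apply]
    have hhp : h ≫ p = 𝟙 (F.obj B) := by
      rw [hh, ← Adjunction.homEquiv_naturality_right_symm, hl2, Equiv.symm_apply_apply]
    refine MC.cof_retract (F.map i) c
      ⟨𝟙 _, 𝟙 _, h, p, by simp, hhp, by simpa using hFh.symm, by simpa using hcp⟩ hc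
  refine ⟨fun f hf => hCof f hf, fun i hic hiw => ⟨hCof i hic, ?_⟩⟩
  rename_i A B
  -- fibrant replacement of F B
  obtain ⟨Z, r, pt, hrc, hrw, hpt, hr⟩ := MC.factor_trivCof_fib (terminal.from (F.obj B))
  have hZ : MC.Fibrant Z := by
    rw [ModelStructure.Fibrant, terminal.hom_ext (terminal.from Z) pt]
    exact hpt
  obtain ⟨E, j, q, hjc, hjw, hq, hjq⟩ := MC.factor_trivCof_fib (F.map i ≫ r)
  have hE : MC.Fibrant E := by
    rw [ModelStructure.Fibrant, terminal.hom_ext (terminal.from E) (q ≫ terminal.from Z)]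
    exact MC.fib_comp _ _ hq hZ
  have hUq : MD.Fib (U.map q) := hFib q hE hZ hq
  have hsq : (adj.homEquiv A E) j ≫ U.map q = i ≫ (adj.homEquiv B Z) r := by
    rw [← Adjunction.homEquiv_naturality_right, hjq,
      ← Adjunction.homEquiv_naturality_left]
  obtain ⟨l, hl1, hl2⟩ := MD.lift hic hUq (Or.inl hiw) hsq
  set h : F.obj B ⟶ E := (adj.homEquiv B E).symm l with hh
  have hFh : F.map i ≫ h = j := by
    rw [hh, ← Adjunction.homEquiv_naturality_left_symm, hl1, Equiv.symm_apply_apply]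
  have hhq : h ≫ q = r := by
    rw [hh, ← Adjunction.homEquiv_naturality_right_symm, hl2, Equiv.symm_apply_apply]
  obtain ⟨k, hk1, hk2⟩ := MC.lift hrc hq (Or.inl hrw)
    (show h ≫ q = r ≫ 𝟙 Z by rw [hhq, Category.comp_id])
  have hje : j ≫ (q ≫ k) = j := by
    rw [← Category.assoc, hjq, Category.assoc, hk1, hFh]
  have he : MC.W (q ≫ k) := MC.w_of_precomp j (q ≫ k) hjw (by rw [hje]; exact hjw)
  have hqW : MC.W q := MC.w_retract q (q ≫ k)
    ⟨𝟙 E, 𝟙 E, k, q, by simp, hk2, by simp, by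
      rw [Category.assoc, hk2, Category.comp_id, Category.id_comp]⟩ he
  have hW : MC.W (F.map i ≫ r) := by rw [← hjq]; exact MC.w_comp j q hjw hqW
  exact MC.w_of_postcomp (F.map i) r hrw hW
end

section
/- Let M be a right proper model category equipped with a functor Q : M → M and a natural transformation η : Id → Q satisfying: (A1) Q preserves weak equivalences; (A2) the maps η_{Q(A)}, Q(η_A) : Q(A) → QQ(A) are weak equivalences for all A; (A3) for every Q-fibration p : B → Q(A) the induced map A ×_{Q(A)} B → B is a Q-weak equivalence. Then M admits a right proper model structure whose weak equivalences are the Q-weak equivalences (maps f with Q(f) a weak equivalence), whose cofibrations are those of M, and whose fibrations are the Q-fibrations (maps with the right lifting property against cofibrations that are Q-weak equivalences). -/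
open CategoryTheory CategoryTheory.Limits

universe v u

variable {C : Type u} [Category.{v} C]

section BousfieldFriedlander

variable [HasPullbacks C]

/-- A model structure is right proper if the pullback of a weak equivalence along a
fibration is a weak equivalence. -/
def ModelStructure.RightProper (M : ModelStructure C) : Prop :=
  ∀ {X Y Z : C} (f : X ⟶ Z) (p : Y ⟶ Z), M.W f → M.Fib p →
    M.W (pullback.snd f p)

variable (M : ModelStructure C) (Q : C ⥤ C) (η : 𝟭 C ⟶ Q)

/-- `Q`-weak equivalences: maps sent to weak equivalences by `Q`. -/
def QWeakEquivalence : MorphismProperty C := fun _ _ f => M.W (Q.map f)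

/-- `Q`-fibrations: maps with the right lifting property against all cofibrations which
are `Q`-weak equivalences. -/
def QFibration : MorphismProperty C := fun X Y p =>
  ∀ {A B : C} (i : A ⟶ B), M.Cof i → QWeakEquivalence M Q i →
    ∀ (f : A ⟶ X) (g : B ⟶ Y), f ≫ p = i ≫ g →
      ∃ h : B ⟶ X, i ≫ h = f ∧ h ≫ p = g

end BousfieldFriedlander

/-!
Factor `Q f` as a trivial cofibration `j : Q X ⟶ Z` followed by a fibration `q`. By (A3) the
canonical map `X ⟶ Y ×_{Q Y} Z` is a `Q`-equivalence, and its projection to `Y` is a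
`Q`-fibration: `q` is a fibration between objects on which `η` is a weak equivalence, so by
right properness it is weakly equivalent over its base to the base change along `η` of a
fibrant replacement of `Q q`, against which `Q`-acyclic cofibrations lift once `Q` is applied.
This gives the factorization into a `Q`-acyclic cofibration and a `Q`-fibration, and the retract
argument shows that `Q`-fibrations which are `Q`-equivalences are trivial fibrations.
For right properness, Ken Brown's lemma makes a `Q`-fibration `p : E ⟶ B` weakly equivalent
over `B` to `B ×_{Q B} Z ⟶ B`, whose base change along a `Q`-equivalence is controlled by (A3)
and the right properness of `M`.
-/

namespace CategoryTheory

lemma hasLiftingProperty_iff_exists_lift {A B X Y : C} (i : A ⟶ B) (p : X ⟶ Y) :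
    HasLiftingProperty i p ↔
      ∀ (f : A ⟶ X) (g : B ⟶ Y), f ≫ p = i ≫ g → ∃ h : B ⟶ X, i ≫ h = f ∧ h ≫ p = g := by
  refine ⟨fun _ f g w => ⟨(CommSq.mk w).lift, by simp, by simp⟩, fun h => ⟨fun {f g} sq => ?_⟩⟩
  obtain ⟨l, hl₁, hl₂⟩ := h f g sq.w
  exact ⟨⟨{ l := l, fac_left := hl₁, fac_right := hl₂ }⟩⟩

lemma isRetractOfMap_iff {X Y X' Y' : C} (f : X ⟶ Y) (f' : X' ⟶ Y') :
    IsRetractOfMap f f' ↔ Nonempty (RetractArrow f f') := by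
  constructor
  · rintro ⟨iX, rX, iY, rY, hX, hY, hi, hr⟩
    exact ⟨{ i := Arrow.homMk iX iY hi, r := Arrow.homMk rX rY hr.symm
             retract := by ext <;> simp [hX, hY] }⟩
  · rintro ⟨e⟩
    exact ⟨e.i.left, e.r.left, e.i.right, e.r.right, e.retract_left, e.retract_right,
      e.i_w, e.r_w.symm⟩

end CategoryTheory

namespace ModelStructure

open MorphismProperty

variable (N : ModelStructure C)

lemma w_of_isIso {X Y : C} (e : X ⟶ Y) [IsIso e] : N.W e :=
  N.w_retract e (𝟙 X) ⟨𝟙 X, 𝟙 X, inv e, e, by simp, by simp, by simp, by simp⟩ (N.w_id X)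

lemma rlp_cof_inf_w : (N.Cof ⊓ N.W).rlp = N.Fib := by
  refine le_antisymm (fun X Y p hp => ?_) (fun X Y p hp A B i hi => ?_)
  · obtain ⟨Z, i, q, hi, hiW, hq, hiq⟩ := N.factor_trivCof_fib p
    have := hp i ⟨hi, hiW⟩
    exact N.fib_retract p q
      ((isRetractOfMap_iff _ _).2 ⟨RetractArrow.ofRightLiftingProperty hiq⟩) hq
  · exact (hasLiftingProperty_iff_exists_lift i p).2
      fun _ _ w => N.lift hi.1 hp (Or.inl hi.2) w

lemma rlp_cof : N.Cof.rlp = N.Fib ⊓ N.W := by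
  refine le_antisymm (fun X Y p hp => ?_) (fun X Y p hp A B i hi => ?_)
  · obtain ⟨Z, i, q, hi, hq, hqW, hiq⟩ := N.factor_cof_trivFib p
    have := hp i hi
    have hret := (isRetractOfMap_iff _ _).2 ⟨RetractArrow.ofRightLiftingProperty hiq⟩
    exact ⟨N.fib_retract p q hret hq, N.w_retract p q hret hqW⟩
  · exact (hasLiftingProperty_iff_exists_lift i p).2
      fun _ _ w => N.lift hi hp.1 (Or.inr hp.2) w

instance : N.Fib.IsStableUnderBaseChange := by
  rw [← rlp_cof_inf_w]; infer_instance

instance : (N.Fib ⊓ N.W).IsStableUnderBaseChange := by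
  rw [← rlp_cof]; infer_instance

/-- Factor `ψ` as a trivial cofibration `c` followed by a trivial fibration `v`, lift through
`v`, and retract along `c`. -/
lemma exists_lift_of_w_comp {Z P Y A B : C} {q : Z ⟶ Y} (hq : N.Fib q) {ψ : Z ⟶ P} (hψ : N.W ψ)
    {p : P ⟶ Y} (hψp : ψ ≫ p = q) {i : A ⟶ B} (hi : N.Cof i) {f : A ⟶ Z} {g : B ⟶ Y}
    (φ : B ⟶ P) (hφ : i ≫ φ = f ≫ ψ) (hφp : φ ≫ p = g) :
    ∃ h : B ⟶ Z, i ≫ h = f ∧ h ≫ q = g := by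
  obtain ⟨V, c, v, hc, hcW, hv, hcv⟩ := N.factor_trivCof_fib ψ
  have hvW : N.W v := N.w_of_precomp c v hcW (hcv ▸ hψ)
  obtain ⟨l, hil, hlv⟩ := N.lift hi hv (Or.inr hvW) (f := f ≫ c) (g := φ)
    (by rw [Category.assoc, hcv, hφ])
  obtain ⟨ρ, hcρ, hρq⟩ := N.lift hc hq (Or.inl hcW) (f := 𝟙 Z) (g := v ≫ p)
    (by rw [Category.id_comp, reassoc_of% hcv, hψp])
  exact ⟨l ≫ ρ, by rw [reassoc_of% hil, hcρ, Category.comp_id],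
    by rw [Category.assoc, hρq, reassoc_of% hlv, hφp]⟩

variable [HasPullbacks C]

/-- Ken Brown's factorization over a base: factor the graph `E₁ ⟶ E₁ ×_B E₂` of `g` as a
trivial cofibration followed by a fibration. -/
lemma exists_section_trivialFib_comp {B E₁ E₂ : C} {π₁ : E₁ ⟶ B} {π₂ : E₂ ⟶ B} {g : E₁ ⟶ E₂}
    (hg : g ≫ π₂ = π₁) (hπ₁ : N.Fib π₁) (hπ₂ : N.Fib π₂) (hgW : N.W g) :
    ∃ (V : C) (c : E₁ ⟶ V) (s : V ⟶ E₁) (t : V ⟶ E₂),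
      c ≫ s = 𝟙 E₁ ∧ c ≫ t = g ∧ s ≫ π₁ = t ≫ π₂ ∧ (N.Fib ⊓ N.W) s ∧ (N.Fib ⊓ N.W) t := by
  obtain ⟨V, c, u, -, hcW, hu, hcu⟩ :=
    N.factor_trivCof_fib (pullback.lift (f := π₁) (g := π₂) (𝟙 E₁) g (by simp [hg]))
  have hcs : c ≫ u ≫ pullback.fst π₁ π₂ = 𝟙 E₁ := by
    rw [reassoc_of% hcu, pullback.lift_fst]
  have hct : c ≫ u ≫ pullback.snd π₁ π₂ = g := by
    rw [reassoc_of% hcu, pullback.lift_snd]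
  exact ⟨V, c, u ≫ pullback.fst π₁ π₂, u ≫ pullback.snd π₁ π₂, hcs, hct,
    by simp [pullback.condition],
    ⟨N.fib_comp _ _ hu (pullback_fst _ _ hπ₂), N.w_of_precomp c _ hcW (hcs ▸ N.w_id E₁)⟩,
    ⟨N.fib_comp _ _ hu (pullback_snd _ _ hπ₁), N.w_of_precomp c _ hcW (hct ▸ hgW)⟩⟩

/-- Ken Brown's lemma for `Over.pullback f`, which preserves trivial fibrations. -/
lemma w_overPullback_map {B X : C} (f : X ⟶ B) {E₁ E₂ : Over B} (g : E₁ ⟶ E₂)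
    (hE₁ : N.Fib E₁.hom) (hE₂ : N.Fib E₂.hom) (hgW : N.W g.left) :
    N.W ((Over.pullback f).map g).left := by
  obtain ⟨V, c, s, t, hcs, hct, hst, hs, ht⟩ :=
    N.exists_section_trivialFib_comp (Over.w g) hE₁ hE₂ hgW
  let c' : E₁ ⟶ Over.mk (t ≫ E₂.hom) := Over.homMk c (by simp [reassoc_of% hct])
  let s' : Over.mk (t ≫ E₂.hom) ⟶ E₁ := Over.homMk s hst
  let t' : Over.mk (t ≫ E₂.hom) ⟶ E₂ := Over.homMk t
  have hcs' : c' ≫ s' = 𝟙 E₁ := Over.OverMorphism.ext hcs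
  have hct' : c' ≫ t' = g := Over.OverMorphism.ext hct
  have hc : N.W ((Over.pullback f).map c').left :=
    N.w_of_postcomp _ _ (overPullbackMap f s' hs).2 (by
      rw [← Over.comp_left, ← (Over.pullback f).map_comp, hcs', (Over.pullback f).map_id]
      exact N.w_id _)
  rw [← hct', (Over.pullback f).map_comp, Over.comp_left]
  exact N.w_comp _ _ hc (overPullbackMap f t' ht).2

end ModelStructure

section Localization

open MorphismProperty

variable (M : ModelStructure C) (Q : C ⥤ C) (η : 𝟭 C ⟶ Q)

def PreservesWeakEquivalences : Prop :=
  ∀ {X Y : C} (f : X ⟶ Y), M.W f → M.W (Q.map f)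

def IsHomotopyIdempotent : Prop :=
  ∀ A : C, M.W (η.app (Q.obj A)) ∧ M.W (Q.map (η.app A))

lemma qWeakEquivalence_comp {X Y Z : C} {f : X ⟶ Y} {g : Y ⟶ Z}
    (hf : QWeakEquivalence M Q f) (hg : QWeakEquivalence M Q g) :
    QWeakEquivalence M Q (f ≫ g) := by
  simpa [QWeakEquivalence] using M.w_comp _ _ hf hg

lemma qWeakEquivalence_of_postcomp {X Y Z : C} (f : X ⟶ Y) (g : Y ⟶ Z)
    (hg : QWeakEquivalence M Q g) (hfg : QWeakEquivalence M Q (f ≫ g)) :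
    QWeakEquivalence M Q f :=
  M.w_of_postcomp _ (Q.map g) hg (by simpa [QWeakEquivalence] using hfg)

lemma qWeakEquivalence_of_precomp {X Y Z : C} (f : X ⟶ Y) (g : Y ⟶ Z)
    (hf : QWeakEquivalence M Q f) (hfg : QWeakEquivalence M Q (f ≫ g)) :
    QWeakEquivalence M Q g :=
  M.w_of_precomp (Q.map f) _ hf (by simpa [QWeakEquivalence] using hfg)

lemma qWeakEquivalence_of_isIso {X Y : C} (e : X ⟶ Y) [IsIso e] : QWeakEquivalence M Q e :=
  M.w_of_isIso (Q.map e)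

lemma qWeakEquivalence_eta_comp (A1 : PreservesWeakEquivalences M Q)
    (A2 : IsHomotopyIdempotent M Q η) {X Z : C} {j : Q.obj X ⟶ Z} (hj : M.W j) :
    QWeakEquivalence M Q (η.app X ≫ j) :=
  qWeakEquivalence_comp M Q (A2 X).2 (A1 j hj)

lemma qFibration_eq_rlp : QFibration M Q = (M.Cof ⊓ QWeakEquivalence M Q).rlp := by
  ext X Y p
  simp only [QFibration, rlp, hasLiftingProperty_iff_exists_lift]
  exact ⟨fun h _ _ i hi => h i hi.1 hi.2, fun h _ _ i hi hiQ => h i ⟨hi, hiQ⟩⟩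

instance : (QFibration M Q).IsStableUnderBaseChange := by
  rw [qFibration_eq_rlp]; infer_instance

instance : (QFibration M Q).IsMultiplicative := by
  rw [qFibration_eq_rlp]; infer_instance

instance : (QFibration M Q).IsStableUnderRetracts := by
  rw [qFibration_eq_rlp]; infer_instance

lemma qFibration_of_fib_of_w {X Y : C} {p : X ⟶ Y} (hp : (M.Fib ⊓ M.W) p) :
    QFibration M Q p := by
  rw [qFibration_eq_rlp]
  rw [← M.rlp_cof] at hp
  exact antitone_rlp inf_le_left _ hp

lemma fib_of_qFibration (A1 : PreservesWeakEquivalences M Q) {X Y : C} {p : X ⟶ Y}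
    (hp : QFibration M Q p) : M.Fib p := by
  rw [qFibration_eq_rlp] at hp
  rw [← M.rlp_cof_inf_w]
  exact antitone_rlp (fun _ _ i hi => ⟨hi.1, A1 i hi.2⟩) _ hp

lemma eta_naturality {X Y : C} (f : X ⟶ Y) : f ≫ η.app Y = η.app X ≫ Q.map f := by
  simpa using η.naturality f

lemma eta_naturality_of_comp_eq {X Y Z : C} {f : X ⟶ Y} {j : Q.obj X ⟶ Z} {q : Z ⟶ Q.obj Y}
    (hjq : j ≫ q = Q.map f) : f ≫ η.app Y = (η.app X ≫ j) ≫ q := by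
  rw [Category.assoc, hjq]; exact eta_naturality Q η f

lemma w_eta_app_of_w (A1 : PreservesWeakEquivalences M Q) (A2 : IsHomotopyIdempotent M Q η)
    {X Z : C} {j : Q.obj X ⟶ Z} (hj : M.W j) : M.W (η.app Z) :=
  M.w_of_precomp j _ hj (by rw [eta_naturality Q η j]; exact M.w_comp _ _ (A2 X).1 (A1 j hj))

/-- Factor `Q i = k ≫ s` with `k` a cofibration, hence a trivial one, and `s` a trivial
fibration; lift `i` against `s`, then `k` against `r`. -/
lemma exists_lift_eta {E Y A B : C} {r : E ⟶ Y} (hr : M.Fib r) {i : A ⟶ B} (hi : M.Cof i)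
    (hiQ : QWeakEquivalence M Q i) {a : Q.obj A ⟶ E} {b : Q.obj B ⟶ Y}
    (w : a ≫ r = Q.map i ≫ b) :
    ∃ d : B ⟶ E, i ≫ d = η.app A ≫ a ∧ d ≫ r = η.app B ≫ b := by
  obtain ⟨D, k, s, hk, hs, hsW, hks⟩ := M.factor_cof_trivFib (Q.map i)
  have hkW : M.W k := M.w_of_postcomp k s hsW (hks ▸ hiQ)
  obtain ⟨l, hkl, hlr⟩ := M.lift hk hr (Or.inl hkW) (f := a) (g := s ≫ b)
    (by rw [w, ← hks, Category.assoc])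
  obtain ⟨m, him, hms⟩ := M.lift hi hs (Or.inr hsW) (f := η.app A ≫ k) (g := η.app B)
    (by rw [Category.assoc, hks, eta_naturality])
  exact ⟨m ≫ l, by rw [reassoc_of% him, hkl], by rw [Category.assoc, hlr, reassoc_of% hms]⟩

variable [HasPullbacks C]

def EtaBaseChangeIsQWeakEquivalence : Prop :=
  ∀ {A B : C} (p : B ⟶ Q.obj A), QFibration M Q p →
    QWeakEquivalence M Q (pullback.snd (η.app A) p)

/-- The map `ψ : Z ⟶ Y ×_{Q Y} Z'` below is a weak equivalence over `Y` by right properness, so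
it suffices to lift against `Y ×_{Q Y} Z' ⟶ Y`, which `exists_lift_eta` does. -/
lemma qFibration_of_fib (hproper : M.RightProper) {Z Y : C} {q : Z ⟶ Y} (hq : M.Fib q)
    (hZ : M.W (η.app Z)) (hY : M.W (η.app Y)) : QFibration M Q q := by
  obtain ⟨Z', j, q', -, hj, hq', hjq⟩ := M.factor_trivCof_fib (Q.map q)
  let ψ : Z ⟶ pullback (η.app Y) q' :=
    pullback.lift q (η.app Z ≫ j) (eta_naturality_of_comp_eq Q η hjq)
  have hψ : M.W ψ := M.w_of_postcomp ψ _ (hproper _ _ hY hq')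
    (by rw [pullback.lift_snd]; exact M.w_comp _ _ hZ hj)
  intro A B i hi hiQ f g sq
  obtain ⟨d, hid, hdq⟩ := exists_lift_eta M Q η hq' hi hiQ (a := Q.map f ≫ j) (b := Q.map g)
    (by rw [Category.assoc, hjq, ← Q.map_comp, sq, Q.map_comp])
  refine M.exists_lift_of_w_comp hq hψ (pullback.lift_fst _ _ _) hi
    (pullback.lift g d (by rw [hdq]; exact eta_naturality Q η g)) ?_ (pullback.lift_fst _ _ _)
  apply pullback.hom_ext
  · simp [ψ, pullback.lift_fst, sq]
  · simp [ψ, pullback.lift_snd, hid, reassoc_of% (eta_naturality Q η f)]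

lemma qWeakEquivalence_pullback_lift (A1 : PreservesWeakEquivalences M Q)
    (A2 : IsHomotopyIdempotent M Q η) (A3 : EtaBaseChangeIsQWeakEquivalence M Q η)
    {X Y Z : C} (f : X ⟶ Y) {j : Q.obj X ⟶ Z} {q : Z ⟶ Q.obj Y} (hj : M.W j)
    (hjq : j ≫ q = Q.map f) (hq : QFibration M Q q) :
    QWeakEquivalence M Q (pullback.lift f (η.app X ≫ j) (eta_naturality_of_comp_eq Q η hjq) :
      X ⟶ pullback (η.app Y) q) :=
  qWeakEquivalence_of_postcomp M Q _ _ (A3 q hq)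
    (by rw [pullback.lift_snd]; exact qWeakEquivalence_eta_comp M Q η A1 A2 hj)

lemma exists_cof_qWeakEquivalence_comp_pullback_fst (A1 : PreservesWeakEquivalences M Q)
    (A2 : IsHomotopyIdempotent M Q η) (A3 : EtaBaseChangeIsQWeakEquivalence M Q η)
    {X Y Z : C} (f : X ⟶ Y) {j : Q.obj X ⟶ Z} {q : Z ⟶ Q.obj Y} (hj : M.W j)
    (hjq : j ≫ q = Q.map f) (hq : QFibration M Q q) :
    ∃ (V : C) (i : X ⟶ V) (r : V ⟶ pullback (η.app Y) q), M.Cof i ∧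
      QWeakEquivalence M Q i ∧ (M.Fib ⊓ M.W) r ∧ i ≫ r ≫ pullback.fst _ _ = f := by
  obtain ⟨V, i, r, hi, hr, hrW, hir⟩ :=
    M.factor_cof_trivFib (pullback.lift f (η.app X ≫ j) (eta_naturality_of_comp_eq Q η hjq))
  refine ⟨V, i, r, hi, qWeakEquivalence_of_postcomp M Q i r (A1 r hrW) ?_, ⟨hr, hrW⟩,
    by rw [reassoc_of% hir, pullback.lift_fst]⟩
  rw [hir]
  exact qWeakEquivalence_pullback_lift M Q η A1 A2 A3 f hj hjq hq

lemma exists_cof_qWeakEquivalence_qFibration (hproper : M.RightProper)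
    (A1 : PreservesWeakEquivalences M Q) (A2 : IsHomotopyIdempotent M Q η)
    (A3 : EtaBaseChangeIsQWeakEquivalence M Q η) {X Y : C} (f : X ⟶ Y) :
    ∃ (Z : C) (i : X ⟶ Z) (p : Z ⟶ Y),
      M.Cof i ∧ QWeakEquivalence M Q i ∧ QFibration M Q p ∧ i ≫ p = f := by
  obtain ⟨Z, j, q, -, hj, hqFib, hjq⟩ := M.factor_trivCof_fib (Q.map f)
  have hq : QFibration M Q q :=
    qFibration_of_fib M Q η hproper hqFib (w_eta_app_of_w M Q η A1 A2 hj) (A2 Y).1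
  obtain ⟨V, i, r, hi, hiQ, hr, hir⟩ :=
    exists_cof_qWeakEquivalence_comp_pullback_fst M Q η A1 A2 A3 f hj hjq hq
  exact ⟨V, i, r ≫ pullback.fst _ _, hi, hiQ,
    (QFibration M Q).comp_mem _ _ (qFibration_of_fib_of_w M Q hr)
      (pullback_fst (P := QFibration M Q) _ _ hq), hir⟩

/-- Here `q` is a trivial fibration, so `p` is a retract of the trivial fibration
`r ≫ pullback.fst _ _`. -/
lemma w_of_qFibration_of_qWeakEquivalence (A1 : PreservesWeakEquivalences M Q)
    (A2 : IsHomotopyIdempotent M Q η) (A3 : EtaBaseChangeIsQWeakEquivalence M Q η)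
    {X Y : C} {p : X ⟶ Y} (hp : QFibration M Q p) (hpQ : QWeakEquivalence M Q p) : M.W p := by
  obtain ⟨Z, j, q, -, hj, hqFib, hjq⟩ := M.factor_trivCof_fib (Q.map p)
  have hq : (M.Fib ⊓ M.W) q := ⟨hqFib, M.w_of_precomp j q hj (hjq ▸ hpQ)⟩
  obtain ⟨V, i, r, hi, hiQ, hr, hir⟩ := exists_cof_qWeakEquivalence_comp_pullback_fst
    M Q η A1 A2 A3 p hj hjq (qFibration_of_fib_of_w M Q hq)
  rw [qFibration_eq_rlp] at hp
  have := hp i ⟨hi, hiQ⟩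
  exact M.w_retract p _ ((isRetractOfMap_iff _ _).2 ⟨RetractArrow.ofRightLiftingProperty hir⟩)
    (M.w_comp _ _ hr.2 (pullback_fst _ _ hq).2)

def localizedModelStructure (hproper : M.RightProper) (A1 : PreservesWeakEquivalences M Q)
    (A2 : IsHomotopyIdempotent M Q η) (A3 : EtaBaseChangeIsQWeakEquivalence M Q η) :
    ModelStructure C where
  W := QWeakEquivalence M Q
  Fib := QFibration M Q
  Cof := M.Cof
  w_id X := by simpa [QWeakEquivalence] using M.w_id (Q.obj X)
  fib_id := (QFibration M Q).id_mem
  cof_id := M.cof_id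
  w_comp _ _ := qWeakEquivalence_comp M Q
  fib_comp := (QFibration M Q).comp_mem
  cof_comp := M.cof_comp
  w_of_postcomp := qWeakEquivalence_of_postcomp M Q
  w_of_precomp := qWeakEquivalence_of_precomp M Q
  w_retract f f' h hf' := by
    obtain ⟨e⟩ := (isRetractOfMap_iff f f').1 h
    exact M.w_retract _ _ ((isRetractOfMap_iff _ _).2 ⟨e.map Q⟩) hf'
  fib_retract f f' h hf' := by
    obtain ⟨e⟩ := (isRetractOfMap_iff f f').1 h
    exact (QFibration M Q).of_retract e hf'
  cof_retract := M.cof_retract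
  lift := fun {_ _ _ _ _ _} hi hp hW {_ _} sq =>
    hW.elim (fun hiQ => hp _ hi hiQ _ _ sq) fun hpQ =>
      M.lift hi (fib_of_qFibration M Q A1 hp)
        (Or.inr (w_of_qFibration_of_qWeakEquivalence M Q η A1 A2 A3 hp hpQ)) sq
  factor_cof_trivFib f := by
    obtain ⟨Z, i, p, hi, hp, hpW, hip⟩ := M.factor_cof_trivFib f
    exact ⟨Z, i, p, hi, qFibration_of_fib_of_w M Q ⟨hp, hpW⟩, A1 p hpW, hip⟩
  factor_trivCof_fib := exists_cof_qWeakEquivalence_qFibration M Q η hproper A1 A2 A3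

/-- Ken Brown's lemma in `localizedModelStructure`, whose trivial fibrations are trivial
fibrations of `M`. -/
lemma w_of_qWeakEquivalence_of_qFibration_over (hproper : M.RightProper)
    (A1 : PreservesWeakEquivalences M Q) (A2 : IsHomotopyIdempotent M Q η)
    (A3 : EtaBaseChangeIsQWeakEquivalence M Q η) {B E₁ E₂ : C} {π₁ : E₁ ⟶ B} {π₂ : E₂ ⟶ B}
    {g : E₁ ⟶ E₂} (hg : g ≫ π₂ = π₁) (hπ₁ : QFibration M Q π₁) (hπ₂ : QFibration M Q π₂)
    (hgQ : QWeakEquivalence M Q g) : M.W g := by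
  obtain ⟨V, c, s, t, hcs, hct, -, hs, ht⟩ :=
    (localizedModelStructure M Q η hproper A1 A2 A3).exists_section_trivialFib_comp
      hg hπ₁ hπ₂ hgQ
  have hsW := w_of_qFibration_of_qWeakEquivalence M Q η A1 A2 A3 hs.1 hs.2
  have hcW : M.W c := M.w_of_postcomp c s hsW (hcs ▸ M.w_id _)
  exact hct ▸ M.w_comp _ _ hcW (w_of_qFibration_of_qWeakEquivalence M Q η A1 A2 A3 ht.1 ht.2)

lemma qWeakEquivalence_of_isPullback_eta (A3 : EtaBaseChangeIsQWeakEquivalence M Q η)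
    {P A B : C} {t : P ⟶ A} {l : P ⟶ B} {p : B ⟶ Q.obj A} (h : IsPullback t l (η.app A) p)
    (hp : QFibration M Q p) : QWeakEquivalence M Q l := by
  rw [← h.isoPullback_hom_snd]
  exact qWeakEquivalence_comp M Q (qWeakEquivalence_of_isIso M Q _) (A3 p hp)

/-- Pasting pullbacks identifies `(B ×_{Q B} Z) ×_B X` with `X ×_{Q X} (Q X ×_{Q B} Z)`, so the
map is a base change of `η_X` as in (A3) followed by the base change of `Q f` along `q`. -/
lemma qWeakEquivalence_pullback_fst_comp_pullback_snd (hproper : M.RightProper)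
    (A1 : PreservesWeakEquivalences M Q) (A3 : EtaBaseChangeIsQWeakEquivalence M Q η)
    {X B Z : C} {f : X ⟶ B} (hf : QWeakEquivalence M Q f) {q : Z ⟶ Q.obj B}
    (hq : QFibration M Q q) :
    QWeakEquivalence M Q
      (pullback.fst (pullback.fst (η.app B) q) f ≫ pullback.snd (η.app B) q) := by
  have hR := (IsPullback.of_hasPullback (Q.map f) q).flip
  have houter : IsPullback (pullback.fst (pullback.fst (η.app B) q) f ≫ pullback.snd _ q)
      (pullback.snd _ f) q (η.app X ≫ Q.map f) := by
    rw [← eta_naturality Q η f]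
    exact (IsPullback.of_hasPullback _ _).paste_horiz (IsPullback.of_hasPullback _ _).flip
  rw [← hR.lift_fst _ _ (houter.w.trans (Category.assoc _ _ _).symm)]
  exact qWeakEquivalence_comp M Q
    (qWeakEquivalence_of_isPullback_eta M Q η A3 (houter.of_right' hR).flip
      (pullback_fst (P := QFibration M Q) _ _ hq))
    (A1 _ (hproper _ _ hf (fib_of_qFibration M Q A1 hq)))

lemma localizedModelStructure_rightProper (hproper : M.RightProper)
    (A1 : PreservesWeakEquivalences M Q) (A2 : IsHomotopyIdempotent M Q η)
    (A3 : EtaBaseChangeIsQWeakEquivalence M Q η) :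
    (localizedModelStructure M Q η hproper A1 A2 A3).RightProper := by
  intro X E B f p hf hp
  obtain ⟨Z, j, q, -, hj, hqFib, hjq⟩ := M.factor_trivCof_fib (Q.map p)
  have hq : QFibration M Q q :=
    qFibration_of_fib M Q η hproper hqFib (w_eta_app_of_w M Q η A1 A2 hj) (A2 B).1
  have hfst : QFibration M Q (pullback.fst (η.app B) q) :=
    pullback_fst (P := QFibration M Q) _ _ hq
  let θ : Over.mk p ⟶ Over.mk (pullback.fst (η.app B) q) :=
    Over.homMk (pullback.lift p (η.app E ≫ j) (eta_naturality_of_comp_eq Q η hjq))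
      (pullback.lift_fst _ _ _)
  have hθ : M.W θ.left := w_of_qWeakEquivalence_of_qFibration_over M Q η hproper A1 A2 A3
    (Over.w θ) hp hfst (qWeakEquivalence_pullback_lift M Q η A1 A2 A3 p hj hjq hq)
  have hθf : M.W ((Over.pullback f).map θ).left := M.w_overPullback_map f θ
    (fib_of_qFibration M Q A1 hp) (fib_of_qFibration M Q A1 hfst) hθ
  have hcomp : ((Over.pullback f).map θ).left ≫ pullback.fst (pullback.fst (η.app B) q) f ≫
      pullback.snd (η.app B) q = pullback.fst p f ≫ η.app E ≫ j := by
    simp [θ, pullback.lift_fst_assoc, pullback.lift_snd]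
  have hfstQ : QWeakEquivalence M Q (pullback.fst p f) :=
    qWeakEquivalence_of_postcomp M Q _ _ (qWeakEquivalence_eta_comp M Q η A1 A2 hj)
      (hcomp ▸ qWeakEquivalence_comp M Q (A1 _ hθf)
        (qWeakEquivalence_pullback_fst_comp_pullback_snd M Q η hproper A1 A3 hf hq))
  rw [← pullbackSymmetry_hom_comp_fst]
  exact qWeakEquivalence_comp M Q (qWeakEquivalence_of_isIso M Q _) hfstQ

end Localization

theorem bousfield_friedlander_localization
    [HasPullbacks C]
    (M : ModelStructure C) (Q : C ⥤ C) (η : 𝟭 C ⟶ Q)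
    (hproper : M.RightProper)
    (A1 : ∀ {X Y : C} (f : X ⟶ Y), M.W f → M.W (Q.map f))
    (A2 : ∀ A : C, M.W (η.app (Q.obj A)) ∧ M.W (Q.map (η.app A)))
    (A3 : ∀ {A B : C} (p : B ⟶ Q.obj A), QFibration M Q p →
      QWeakEquivalence M Q (pullback.snd (η.app A) p)) :
    ∃ M' : ModelStructure C,
      M'.W = QWeakEquivalence M Q ∧
      M'.Cof = M.Cof ∧
      M'.Fib = QFibration M Q ∧
      M'.RightProper :=
  ⟨localizedModelStructure M Q η hproper A1 A2 A3, rfl, rfl, rfl,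
    localizedModelStructure_rightProper M Q η hproper A1 A2 A3⟩
end

section
/- Under the hypotheses of the Bousfield–Friedlander localization theorem (right proper M, functor Q, natural transformation η satisfying (A1)-(A3)), an object A of M is fibrant in the localized model structure if and only if A is fibrant in M and the map η_A : A → Q(A) is a weak equivalence in M. -/
open CategoryTheory CategoryTheory.Limits

universe v u

variable {C : Type u} [Category.{v} C]

/-!
STATEMENT 14: Under the hypotheses of the Bousfield–Friedlander localization theorem
(`M` right proper, `(Q, η)` satisfying (A1)–(A3)), an object `A` is fibrant in the
localized model structure (i.e. `A ⟶ *` is a `Q`-fibration) if and only if `A` is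
fibrant in `M` and `η_A : A ⟶ Q(A)` is a weak equivalence in `M`.
-/

theorem fibrant_in_localized_iff
    [HasPullbacks C] [HasTerminal C]
    (M : ModelStructure C) (Q : C ⥤ C) (η : 𝟭 C ⟶ Q)
    (hproper : M.RightProper)
    (A1 : ∀ {X Y : C} (f : X ⟶ Y), M.W f → M.W (Q.map f))
    (A2 : ∀ A : C, M.W (η.app (Q.obj A)) ∧ M.W (Q.map (η.app A)))
    (A3 : ∀ {A B : C} (p : B ⟶ Q.obj A), QFibration M Q p →
      QWeakEquivalence M Q (pullback.snd (η.app A) p))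
    (A : C) :
    QFibration M Q (terminal.from A) ↔
      (M.Fib (terminal.from A) ∧ M.W (η.app A)) := by
  constructor
  · intro hQ
    constructor
    · -- A is fibrant: retract argument
      obtain ⟨Z, j, p, hjC, hjW, hpF, hjp⟩ := M.factor_trivCof_fib (terminal.from A)
      obtain ⟨r, hr1, hr2⟩ := hQ j hjC (A1 j hjW) (𝟙 A) p
        (by rw [hjp, Category.id_comp])
      exact M.fib_retract (terminal.from A) p
        ⟨j, r, 𝟙 _, 𝟙 _, hr1, Category.id_comp _,
          by rw [hjp, Category.comp_id],
          by rw [Category.comp_id]; exact hr2.symm⟩ hpF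
    · -- η_A is a weak equivalence
      obtain ⟨Z, c, t, hcC, htF, htW, hct⟩ := M.factor_cof_trivFib (η.app A)
      have hQt : M.W (Q.map t) := A1 t htW
      have hQc : M.W (Q.map c) := by
        refine M.w_of_postcomp (Q.map c) (Q.map t) hQt ?_
        rw [← Q.map_comp, hct]
        exact (A2 A).2
      obtain ⟨ξ, hξ1, -⟩ := hQ c hcC hQc (𝟙 A) (terminal.from Z)
        (terminal.hom_ext _ _)
      have hηZ : M.W (η.app Z) := by
        refine M.w_of_postcomp (η.app Z) (Q.map t) hQt ?_
        have hn := η.naturality t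
        simp only [Functor.id_map] at hn
        rw [← hn]
        exact M.w_comp t (η.app (Q.obj A)) htW (A2 A).1
      refine M.w_retract (η.app A) (η.app Z)
        ⟨c, ξ, Q.map c, Q.map ξ, hξ1, ?_, ?_, ?_⟩ hηZ
      · rw [← Q.map_comp, hξ1, Q.map_id]
      · have hn := η.naturality c
        simp only [Functor.id_map] at hn
        exact hn
      · have hn := η.naturality ξ
        simp only [Functor.id_map] at hn
        exact hn.symm
  · rintro ⟨hfib, hη⟩
    intro U V i hiC hiQ f g hsq
    -- factor Q(i) as trivial cofibration c' followed by fibration t'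
    obtain ⟨E', c', t', hc'C, hc'W, ht'F, hc't'⟩ := M.factor_trivCof_fib (Q.map i)
    have ht'W : M.W t' := M.w_of_precomp c' t' hc'W (by rw [hc't']; exact hiQ)
    -- fibrant replacement of Q(A)
    obtain ⟨R, v, qR, hvC, hvW, hqRF, hvq⟩ := M.factor_trivCof_fib (terminal.from (Q.obj A))
    -- lift w : V ⟶ E'
    obtain ⟨w, hw1, hw2⟩ := M.lift hiC ht'F (Or.inr ht'W)
      (f := η.app U ≫ c') (g := η.app V)
      (by
        have hn := η.naturality i
        simp only [Functor.id_map] at hn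
        rw [Category.assoc, hc't', ← hn])
    -- lift k : E' ⟶ R extending Q(f) ≫ v along c'
    obtain ⟨k, hk1, -⟩ := M.lift hc'C hqRF (Or.inl hc'W)
      (f := Q.map f ≫ v) (g := terminal.from E')
      (terminal.hom_ext _ _)
    -- factor η_A ≫ v as trivial cofibration jX followed by fibration pX
    obtain ⟨X', jX, pX, hjXC, hjXW, hpXF, hjXp⟩ := M.factor_trivCof_fib (η.app A ≫ v)
    have hpXW : M.W pX := M.w_of_precomp jX pX hjXW
      (by rw [hjXp]; exact M.w_comp _ _ hη hvW)
    -- retraction r : X' ⟶ A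
    obtain ⟨r, hr1, -⟩ := M.lift hjXC hfib (Or.inl hjXW)
      (f := 𝟙 A) (g := terminal.from X')
      (terminal.hom_ext _ _)
    -- final lift
    have hnf := η.naturality f
    simp only [Functor.id_map] at hnf
    have e1 : i ≫ w ≫ k = η.app U ≫ Q.map f ≫ v := by
      rw [← Category.assoc, hw1, Category.assoc, hk1]
    have e2 : f ≫ η.app A ≫ v = η.app U ≫ Q.map f ≫ v := by
      rw [← Category.assoc, hnf, Category.assoc]
    obtain ⟨h', hh'1, -⟩ := M.lift hiC hpXF (Or.inr hpXW)
      (f := f ≫ jX) (g := w ≫ k)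
      (by rw [Category.assoc, hjXp, e2, e1])
    exact ⟨h' ≫ r,
      by rw [← Category.assoc, hh'1, Category.assoc, hr1, Category.comp_id],
      terminal.hom_ext _ _⟩
end
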